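/- Let A be a C*-algebra, E a right Hilbert A-module, F ⊆ E a closed submodule, φ : A → B(H₁) completely positive, and suppose Φ : F → B(H₁, H₂) is a non-degenerate φ-map admitting a φ-map extension Ψ : E → B(H₁, H₂). Then every φ-map Θ : F → B(H₁, K) (K any Hilbert space) admits a φ-map extension Θ' : E → B(H₁, K). -/

import Mathlib

/-!
Since `Θ(x)*Θ(y) = φ⟨x, y⟩ = Φ(x)*Φ(y)`, the vectors `Φ(x)h` and `Θ(x)h` (`x ∈ F`, `h ∈ H₁`)
have the same Gram matrix. Hence `Φ(x)h ↦ Θ(x)h` extends linearly to their span and, the span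
being dense by non-degeneracy of `Φ`, to an isometry `V : H₂ → K`. Then `Θ' = V ∘ Ψ`
extends `Θ`, and it is a `φ`-map because `V*V = 1`.
-/

open scoped ComplexOrder RightActions Matrix

/-- The `B(H₁)`-valued inner product `⟪T, S⟫ = T* S` on `B(H₁, H₂)`. -/
noncomputable def opInner {H₁ H₂ : Type*} [NormedAddCommGroup H₁] [InnerProductSpace ℂ H₁]
    [CompleteSpace H₁] [NormedAddCommGroup H₂] [InnerProductSpace ℂ H₂] [CompleteSpace H₂]
    (T S : H₁ →L[ℂ] H₂) : H₁ →L[ℂ] H₁ :=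
  (ContinuousLinearMap.adjoint T).comp S

/-- A matrix over a (C*-)algebra is positive iff it factors as `Nᴴ * N`. -/
def MatIsPos {R : Type*} [NonUnitalSemiring R] [StarRing R] {n : ℕ}
    (M : Matrix (Fin n) (Fin n) R) : Prop :=
  ∃ N : Matrix (Fin n) (Fin n) R, M = Nᴴ * N

/-- A linear map between C*-algebras is completely positive if all of its matrix
amplifications preserve positivity. -/
def IsCompletelyPositive {A B : Type*} [NonUnitalSemiring A] [StarRing A] [Module ℂ A]
    [NonUnitalSemiring B] [StarRing B] [Module ℂ B] (φ : A →ₗ[ℂ] B) : Prop :=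
  ∀ (n : ℕ) (M : Matrix (Fin n) (Fin n) A), MatIsPos M → MatIsPos (M.map φ)

/-- The Hilbert C⋆-module class of the older Mathlib (right `A`-action via `Aᵐᵒᵖ`), restated
here because Mathlib's `CStarModule` now uses a left action `SMul A E`. -/
class CStarModuleRight (A : outParam <| Type*) (E : Type*) [NonUnitalSemiring A] [StarRing A]
    [Module ℂ A] [AddCommGroup E] [Module ℂ E] [PartialOrder A] [SMul Aᵐᵒᵖ E] [Norm A] [Norm E]
    extends Inner A E where
  inner_add_right {x} {y} {z} : inner x (y + z) = inner x y + inner x z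
  inner_self_nonneg {x} : 0 ≤ inner x x
  inner_self {x} : inner x x = 0 ↔ x = 0
  inner_op_smul_right {a : A} {x y : E} : inner x (y <• a) = inner x y * a
  inner_smul_right_complex {z : ℂ} {x} {y} : inner x (z • y) = z • inner x y
  star_inner x y : star (inner x y) = inner y x
  norm_eq_sqrt_norm_inner_self x : ‖x‖ = √‖inner x x‖

section OpInner

open ContinuousLinearMap

variable {H₁ H₂ K : Type*}
  [NormedAddCommGroup H₁] [InnerProductSpace ℂ H₁] [CompleteSpace H₁]
  [NormedAddCommGroup H₂] [InnerProductSpace ℂ H₂] [CompleteSpace H₂]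
  [NormedAddCommGroup K] [InnerProductSpace ℂ K] [CompleteSpace K]

theorem inner_opInner_apply (T S : H₁ →L[ℂ] H₂) (h h' : H₁) :
    inner ℂ h (opInner T S h') = inner ℂ (T h) (S h') :=
  adjoint_inner_right T h (S h')

theorem opInner_linearIsometry_comp (V : H₂ →ₗᵢ[ℂ] K) (T S : H₁ →L[ℂ] H₂) :
    opInner (V.toContinuousLinearMap ∘L T) (V.toContinuousLinearMap ∘L S) = opInner T S := by
  have hV : adjoint V.toContinuousLinearMap ∘L V.toContinuousLinearMap = 1 :=
    (norm_map_iff_adjoint_comp_self _).mp V.norm_map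
  simp only [opInner, adjoint_comp, comp_assoc]
  rw [← comp_assoc _ _ S, hV, one_def, id_comp]

end OpInner

section GramMatrix

open Finsupp

variable {𝕜 E F ι : Type*} [RCLike 𝕜] [NormedAddCommGroup E] [InnerProductSpace 𝕜 E]
  [NormedAddCommGroup F] [InnerProductSpace 𝕜 F] {u : ι → E} {w : ι → F}

theorem inner_linearCombination_eq_of_inner_eq
    (h : ∀ i j, inner 𝕜 (u i) (u j) = inner 𝕜 (w i) (w j)) (c d : ι →₀ 𝕜) :
    inner 𝕜 (linearCombination 𝕜 u c) (linearCombination 𝕜 u d) =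
      inner 𝕜 (linearCombination 𝕜 w c) (linearCombination 𝕜 w d) := by
  simp only [linearCombination_apply, Finsupp.sum, sum_inner, inner_sum, inner_smul_left,
    inner_smul_right, h]

theorem norm_linearCombination_eq_of_inner_eq
    (h : ∀ i j, inner 𝕜 (u i) (u j) = inner 𝕜 (w i) (w j)) (c : ι →₀ 𝕜) :
    ‖linearCombination 𝕜 w c‖ = ‖linearCombination 𝕜 u c‖ := by
  rw [norm_eq_sqrt_re_inner (𝕜 := 𝕜), norm_eq_sqrt_re_inner (𝕜 := 𝕜),
    inner_linearCombination_eq_of_inner_eq h]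

theorem exists_linearIsometry_apply_eq_of_inner_eq [CompleteSpace F]
    (hu : Dense (Submodule.span 𝕜 (Set.range u) : Set E))
    (h : ∀ i j, inner 𝕜 (u i) (u j) = inner 𝕜 (w i) (w j)) :
    ∃ V : E →ₗᵢ[𝕜] F, ∀ i, V (u i) = w i := by
  have hdense : DenseRange (linearCombination 𝕜 u) := by
    rwa [DenseRange, ← LinearMap.coe_range, range_linearCombination]
  have hbound : ∃ C, ∀ c, ‖linearCombination 𝕜 w c‖ ≤ C * ‖linearCombination 𝕜 u c‖ :=
    ⟨1, fun c => by rw [one_mul, norm_linearCombination_eq_of_inner_eq h]⟩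
  set V := (linearCombination 𝕜 w).extendOfNorm (linearCombination 𝕜 u)
  have hV : ∀ c, V (linearCombination 𝕜 u c) = linearCombination 𝕜 w c :=
    LinearMap.extendOfNorm_eq hdense hbound
  have hnorm : ∀ x, ‖V x‖ = ‖x‖ := by
    refine fun x => hdense.induction_on x (isClosed_eq (by fun_prop) (by fun_prop)) ?_
    intro c
    rw [hV, norm_linearCombination_eq_of_inner_eq h]
  refine ⟨⟨V.toLinearMap, hnorm⟩, fun i => ?_⟩
  simpa using hV (single i 1)

end GramMatrix

theorem every_phiMap_extends_of_nondegenerate_extension_general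
    {A : Type*} [NonUnitalCStarAlgebra A] [PartialOrder A]
    {E : Type*} [NormedAddCommGroup E] [NormedSpace ℂ E] [SMul Aᵐᵒᵖ E]
    [CStarModuleRight A E]
    {H₁ H₂ K : Type*} [NormedAddCommGroup H₁] [InnerProductSpace ℂ H₁] [CompleteSpace H₁]
    [NormedAddCommGroup H₂] [InnerProductSpace ℂ H₂] [CompleteSpace H₂]
    [NormedAddCommGroup K] [InnerProductSpace ℂ K] [CompleteSpace K]
    (F : Submodule ℂ E)
    (φ : A →ₗ[ℂ] (H₁ →L[ℂ] H₁))
    (Φ : F → (H₁ →L[ℂ] H₂))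
    (hΦmap : ∀ x y : F, opInner (Φ x) (Φ y) = φ (inner A (x : E) (y : E)))
    (hnd : Dense (↑(Submodule.span ℂ {v : H₂ | ∃ (x : F) (h : H₁), v = Φ x h}) : Set H₂))
    (Ψ : E → (H₁ →L[ℂ] H₂))
    (hext : ∀ x : F, Ψ x = Φ x)
    (hΨmap : ∀ x y : E, opInner (Ψ x) (Ψ y) = φ (inner A x y))
    (Θ : F → (H₁ →L[ℂ] K))
    (hΘmap : ∀ x y : F, opInner (Θ x) (Θ y) = φ (inner A (x : E) (y : E))) :
    ∃ Θ' : E → (H₁ →L[ℂ] K),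
      (∀ x : F, Θ' x = Θ x) ∧
      (∀ x y : E, opInner (Θ' x) (Θ' y) = φ (inner A x y)) := by
  have hrange :
      Set.range (fun p : F × H₁ => Φ p.1 p.2) = {v | ∃ (x : F) (h : H₁), v = Φ x h} := by
    ext v
    simp [eq_comm]
  have hgram : ∀ p q : F × H₁,
      inner ℂ (Φ p.1 p.2) (Φ q.1 q.2) = inner ℂ (Θ p.1 p.2) (Θ q.1 q.2) := fun p q => by
    rw [← inner_opInner_apply, ← inner_opInner_apply, hΦmap, hΘmap]
  obtain ⟨V, hV⟩ := exists_linearIsometry_apply_eq_of_inner_eq (hrange ▸ hnd) hgram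
  refine ⟨fun x => V.toContinuousLinearMap ∘L Ψ x, fun x => ?_, fun x y => ?_⟩
  · ext h
    simpa [hext] using hV (x, h)
  · rw [opInner_linearIsometry_comp, hΨmap]

/-- **Lemma (ii): extendability of one non-degenerate φ-map implies extendability
of all operator-valued φ-maps on `F`.**
If some non-degenerate `φ`-map `Φ : F → B(H₁, H₂)` admits a `φ`-map extension
`Ψ : E → B(H₁, H₂)`, then every `φ`-map `Θ : F → B(H₁, K)` admits a `φ`-map
extension `Θ' : E → B(H₁, K)`. -/
theorem every_phiMap_extends_of_nondegenerate_extension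
    {A : Type*} [NonUnitalCStarAlgebra A] [PartialOrder A] [StarOrderedRing A]
    {E : Type*} [NormedAddCommGroup E] [NormedSpace ℂ E] [SMul Aᵐᵒᵖ E]
    [CStarModuleRight A E] [CompleteSpace E]
    {H₁ H₂ K : Type*} [NormedAddCommGroup H₁] [InnerProductSpace ℂ H₁] [CompleteSpace H₁]
    [NormedAddCommGroup H₂] [InnerProductSpace ℂ H₂] [CompleteSpace H₂]
    [NormedAddCommGroup K] [InnerProductSpace ℂ K] [CompleteSpace K]
    (F : Submodule ℂ E) (hFclosed : IsClosed (F : Set E))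
    (hFmod : ∀ (a : A) (x : E), x ∈ F → x <• a ∈ F)
    (φ : A →ₗ[ℂ] (H₁ →L[ℂ] H₁)) (hφ : IsCompletelyPositive φ)
    (Φ : F → (H₁ →L[ℂ] H₂))
    (hΦmap : ∀ x y : F, opInner (Φ x) (Φ y) = φ (inner A (x : E) (y : E)))
    (hnd : Dense (↑(Submodule.span ℂ {v : H₂ | ∃ (x : F) (h : H₁), v = Φ x h}) : Set H₂))
    (Ψ : E → (H₁ →L[ℂ] H₂))
    (hext : ∀ x : F, Ψ x = Φ x)
    (hΨmap : ∀ x y : E, opInner (Ψ x) (Ψ y) = φ (inner A x y))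
    (Θ : F → (H₁ →L[ℂ] K))
    (hΘmap : ∀ x y : F, opInner (Θ x) (Θ y) = φ (inner A (x : E) (y : E))) :
    ∃ Θ' : E → (H₁ →L[ℂ] K),
      (∀ x : F, Θ' x = Θ x) ∧
      (∀ x y : E, opInner (Θ' x) (Θ' y) = φ (inner A x y)) :=
  every_phiMap_extends_of_nondegenerate_extension_general F φ Φ hΦmap hnd Ψ hext hΨmap Θ hΘmap
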